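/- arXiv:1602.05018 — 4 statements merged into one kernel-verified Lean document; each statement's English description precedes it below -/
import Mathlib

section
/- Let p > 0 and l > 0 with l < min(1, p). Let α and β be real numbers such that 1/(1−l) < α ≤ 1/(1−p) and 2 < β < 2/(1−p) if p < 1, and α > 1/(1−l) and β > 2 if p ≥ 1. Let A > 0, B ≥ 0 and c₀ ≥ 0. Then there exist ξ₀ ∈ (0,1] and T₀ ∈ (0,1] such that for all τ ∈ (0, T₀] and all s ≥ 0 for which ξ := ξ₀ − s/√τ > 0, the following inequality holds: α A τ^{α−1} ξ^β + (β/2) A s τ^{α−3/2} ξ^{β−1} + β A B τ^{α−1/2} ξ^{β−1} + c₀ A^p τ^{αp} ξ^{βp} ≤ β(β−1) A τ^{α−1} ξ^{β−2}. -/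
set_option maxHeartbeats 1000000

lemma aux_small (C d ε : ℝ) (hC : 0 ≤ C) (hd : 0 < d) (hε : 0 < ε) :
    ∃ x ∈ Set.Ioc (0:ℝ) 1, C * x ^ d < ε := by
  rcases eq_or_lt_of_le hC with h0 | hCpos
  · exact ⟨1, ⟨one_pos, le_refl 1⟩, by rw [← h0]; simpa using hε⟩
  · have hεC : 0 < ε / (2*C) := by positivity
    set y := (ε / (2*C)) ^ d⁻¹ with hy
    have hypos : 0 < y := Real.rpow_pos_of_pos hεC _
    refine ⟨min 1 y, ⟨lt_min one_pos hypos, min_le_left _ _⟩, ?_⟩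
    have hxpos : (0:ℝ) < min 1 y := lt_min one_pos hypos
    have h1 : (min 1 y) ^ d ≤ y ^ d :=
      Real.rpow_le_rpow hxpos.le (min_le_right _ _) hd.le
    have h2 : y ^ d = ε/(2*C) := by
      rw [hy, ← Real.rpow_mul hεC.le, inv_mul_cancel₀ hd.ne', Real.rpow_one]
    have : C * (min 1 y) ^ d ≤ ε/2 := by
      rw [h2] at h1
      calc C * (min 1 y) ^ d ≤ C * (ε/(2*C)) := by nlinarith
        _ = ε/2 := by field_simp
    linarith


/-- The central algebraic inequality in the proof of Theorem 3.5 (nonuniqueness for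
`l < min 1 p`): the self-similar profile data satisfy the interior subsolution
inequality for small `ξ₀` and small `T₀`. -/
theorem subsolution_algebraic_inequality (p l : ℝ) (hp : 0 < p) (hl : 0 < l)
    (hlmin : l < min 1 p) (α β : ℝ)
    (hlt : p < 1 → 1 / (1 - l) < α ∧ α ≤ 1 / (1 - p) ∧ 2 < β ∧ β < 2 / (1 - p))
    (hge : 1 ≤ p → 1 / (1 - l) < α ∧ 2 < β)
    (A B c₀ : ℝ) (hA : 0 < A) (hB : 0 ≤ B) (hc₀ : 0 ≤ c₀) :
    ∃ ξ₀ ∈ Set.Ioc (0 : ℝ) 1, ∃ T₀ ∈ Set.Ioc (0 : ℝ) 1,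
      ∀ τ ∈ Set.Ioc (0 : ℝ) T₀, ∀ s : ℝ, 0 ≤ s →
        0 < ξ₀ - s / Real.sqrt τ →
        α * A * τ ^ (α - 1) * (ξ₀ - s / Real.sqrt τ) ^ β
          + (β / 2) * A * s * τ ^ (α - 3 / 2) * (ξ₀ - s / Real.sqrt τ) ^ (β - 1)
          + β * A * B * τ ^ (α - 1 / 2) * (ξ₀ - s / Real.sqrt τ) ^ (β - 1)
          + c₀ * A ^ p * τ ^ (α * p) * (ξ₀ - s / Real.sqrt τ) ^ (β * p)
        ≤ β * (β - 1) * A * τ ^ (α - 1) * (ξ₀ - s / Real.sqrt τ) ^ (β - 2) := by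
  have hl1 : l < 1 := lt_of_lt_of_le hlmin (min_le_left _ _)
  -- basic facts on α, β
  have hα1 : 1 < α := by
    rcases lt_or_ge p 1 with h | h
    · have h' := (hlt h).1
      have : 1 < 1 / (1 - l) := one_lt_one_div (by linarith) (by linarith)
      linarith
    · have h' := (hge h).1
      have : 1 < 1 / (1 - l) := one_lt_one_div (by linarith) (by linarith)
      linarith
  have hβ2 : 2 < β := by
    rcases lt_or_ge p 1 with h | h
    · exact (hlt h).2.2.1
    · exact (hge h).2
  have hf : 0 < β * p - β + 2 := by
    rcases lt_or_ge p 1 with h | h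
    · have hb := (hlt h).2.2.2
      have h1p : 0 < 1 - p := by linarith
      have h2 := (lt_div_iff₀ h1p).mp hb
      nlinarith
    · nlinarith
  have he : 0 ≤ α * p - α + 1 := by
    rcases lt_or_ge p 1 with h | h
    · have ha := (hlt h).2.1
      have h1p : 0 < 1 - p := by linarith
      have h2 := (le_div_iff₀ h1p).mp ha
      nlinarith
    · nlinarith
  set M := β * (β - 1) with hM
  have hM4 : 0 < M / 4 := by rw [hM]; nlinarith
  -- choose ξ₀
  obtain ⟨x1, hx1, hb1⟩ := aux_small α 2 (M/4) (by linarith) two_pos hM4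
  obtain ⟨x2, hx2, hb2⟩ := aux_small (β/2) 2 (M/4) (by linarith) two_pos hM4
  obtain ⟨x3, hx3, hb3⟩ := aux_small (c₀ * A ^ (p-1)) (β*p - β + 2) (M/4)
    (by positivity) hf hM4
  set ξ₀ := min x1 (min x2 x3) with hξ₀def
  have hξ₀pos : 0 < ξ₀ := lt_min hx1.1 (lt_min hx2.1 hx3.1)
  have hξ₀le1 : ξ₀ ≤ 1 := le_trans (min_le_left _ _) hx1.2
  have hmono : ∀ d : ℝ, 0 < d → ∀ x : ℝ, ξ₀ ≤ x → ξ₀ ^ d ≤ x ^ d :=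
    fun d hd x hx => Real.rpow_le_rpow hξ₀pos.le hx hd.le
  have hB1 : α * ξ₀ ^ (2:ℝ) < M/4 := by
    have := hmono 2 two_pos x1 (min_le_left _ _)
    nlinarith
  have hB2 : (β/2) * ξ₀ ^ (2:ℝ) < M/4 := by
    have := hmono 2 two_pos x2 (le_trans (min_le_right _ _) (min_le_left _ _))
    nlinarith
  have hB4 : c₀ * A ^ (p-1) * ξ₀ ^ (β*p - β + 2) < M/4 := by
    have := hmono _ hf x3 (le_trans (min_le_right _ _) (min_le_right _ _))
    have hCnn : (0:ℝ) ≤ c₀ * A ^ (p-1) := by positivity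
    nlinarith
  -- choose T₀
  obtain ⟨T₀, hT₀, hb5⟩ := aux_small (β * B * ξ₀) (1/2) (M/4)
    (by positivity) (by norm_num) hM4
  refine ⟨ξ₀, ⟨hξ₀pos, hξ₀le1⟩, T₀, hT₀, ?_⟩
  intro τ hτ s hs hξpos
  obtain ⟨hτ0, hτT⟩ := hτ
  have hτ1 : τ ≤ 1 := le_trans hτT hT₀.2
  set ξ := ξ₀ - s / Real.sqrt τ with hξdef
  have hsτ : 0 < Real.sqrt τ := Real.sqrt_pos.mpr hτ0
  have hξle : ξ ≤ ξ₀ := by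
    have : 0 ≤ s / Real.sqrt τ := div_nonneg hs hsτ.le
    simp [hξdef]; linarith
  set P := A * τ ^ (α - 1) * ξ ^ (β - 2) with hPdef
  have hP : 0 < P := by
    have := Real.rpow_pos_of_pos hτ0 (α - 1)
    have := Real.rpow_pos_of_pos hξpos (β - 2)
    positivity
  -- identities
  have rξβ : ξ ^ β = ξ ^ (2:ℝ) * ξ ^ (β - 2) := by
    rw [← Real.rpow_add hξpos]; ring_nf
  have rξβ1 : ξ ^ (β-1) = ξ * ξ ^ (β - 2) := by
    have h := Real.rpow_add hξpos 1 (β-2)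
    rw [Real.rpow_one] at h
    rw [← h]; ring_nf
  have rτ32 : τ ^ (α - 3/2) = τ ^ (α - 1) * (Real.sqrt τ)⁻¹ := by
    rw [Real.sqrt_eq_rpow, ← Real.rpow_neg hτ0.le, ← Real.rpow_add hτ0]
    ring_nf
  have rτ12 : τ ^ (α - 1/2) = τ ^ (α - 1) * Real.sqrt τ := by
    rw [Real.sqrt_eq_rpow, ← Real.rpow_add hτ0]
    ring_nf
  have rAp : A ^ p = A ^ (p-1) * A := by
    have h := Real.rpow_add hA (p-1) 1
    rw [Real.rpow_one] at h
    rw [← h]; ring_nf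
  have rταp : τ ^ (α * p) = τ ^ (α*p - α + 1) * τ ^ (α - 1) := by
    rw [← Real.rpow_add hτ0]; ring_nf
  have rξβp : ξ ^ (β * p) = ξ ^ (β*p - β + 2) * ξ ^ (β - 2) := by
    rw [← Real.rpow_add hξpos]; ring_nf
  -- rpow squares to products
  have rsq : ∀ x : ℝ, 0 ≤ x → x ^ (2:ℝ) = x * x := by
    intro x hx
    rw [show (2:ℝ) = ((2:ℕ):ℝ) by norm_num, Real.rpow_natCast]
    ring
  -- per-term bounds on bracket
  have b1 : α * ξ ^ (2:ℝ) < M/4 := by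
    have := hmono 2 two_pos ξ₀ le_rfl
    have h' : ξ ^ (2:ℝ) ≤ ξ₀ ^ (2:ℝ) := Real.rpow_le_rpow hξpos.le hξle two_pos.le
    nlinarith
  have b2 : (β/2) * ((s / Real.sqrt τ) * ξ) < M/4 := by
    have hsdiv : s / Real.sqrt τ = ξ₀ - ξ := by rw [hξdef]; ring
    rw [hsdiv]
    have hsq := rsq ξ₀ hξ₀pos.le
    have hq : (ξ₀ - ξ) * ξ ≤ ξ₀ ^ (2:ℝ) := by
      rw [hsq]
      nlinarith [mul_le_mul_of_nonneg_left hξle hξ₀pos.le,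
        mul_nonneg hξpos.le hξpos.le]
    have := mul_le_mul_of_nonneg_left hq (by linarith : (0:ℝ) ≤ β/2)
    linarith
  have b3 : β * B * (Real.sqrt τ * ξ) ≤ M/4 := by
    have h1 : Real.sqrt τ ≤ Real.sqrt T₀ := Real.sqrt_le_sqrt hτT
    have h2 : Real.sqrt T₀ = T₀ ^ ((1:ℝ)/2) := Real.sqrt_eq_rpow T₀
    have h3 : β * B * ξ₀ * T₀ ^ ((1:ℝ)/2) < M/4 := hb5
    have hβB : 0 ≤ β * B := by nlinarith
    have hq : Real.sqrt τ * ξ ≤ Real.sqrt T₀ * ξ₀ :=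
      mul_le_mul h1 hξle hξpos.le (Real.sqrt_nonneg _)
    have h5 := mul_le_mul_of_nonneg_left hq hβB
    have h4 : β * B * (Real.sqrt T₀ * ξ₀) = β * B * ξ₀ * T₀ ^ ((1:ℝ)/2) := by
      rw [h2]; ring
    exact le_trans (h5.trans h4.le) h3.le
  have b4 : c₀ * A ^ (p-1) * (τ ^ (α*p - α + 1) * ξ ^ (β*p - β + 2)) < M/4 := by
    have hτe : τ ^ (α*p - α + 1) ≤ 1 := Real.rpow_le_one hτ0.le hτ1 he
    have hξf : ξ ^ (β*p - β + 2) ≤ ξ₀ ^ (β*p - β + 2) :=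
      Real.rpow_le_rpow hξpos.le hξle hf.le
    have hτe0 : 0 < τ ^ (α*p - α + 1) := Real.rpow_pos_of_pos hτ0 _
    have hξf0 : 0 < ξ ^ (β*p - β + 2) := Real.rpow_pos_of_pos hξpos _
    have hCnn : (0:ℝ) ≤ c₀ * A ^ (p-1) := by positivity
    have hq : τ ^ (α*p - α + 1) * ξ ^ (β*p - β + 2) ≤ ξ₀ ^ (β*p - β + 2) := by
      have h := mul_le_mul hτe hξf hξf0.le zero_le_one
      simpa using h
    exact lt_of_le_of_lt (mul_le_mul_of_nonneg_left hq hCnn) hB4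
  -- main computation
  have key : α * A * τ ^ (α - 1) * ξ ^ β
      + (β / 2) * A * s * τ ^ (α - 3 / 2) * ξ ^ (β - 1)
      + β * A * B * τ ^ (α - 1 / 2) * ξ ^ (β - 1)
      + c₀ * A ^ p * τ ^ (α * p) * ξ ^ (β * p)
      = (α * ξ ^ (2:ℝ) + (β/2) * ((s / Real.sqrt τ) * ξ)
          + β * B * (Real.sqrt τ * ξ)
          + c₀ * A ^ (p-1) * (τ ^ (α*p - α + 1) * ξ ^ (β*p - β + 2))) * P := by
    rw [rξβ, rξβ1, rτ32, rτ12, rAp, rταp, rξβp, hPdef, div_eq_mul_inv]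
    ring
  have hfin : β * (β - 1) * A * τ ^ (α - 1) * ξ ^ (β - 2) = M * P := by
    rw [hM, hPdef]; ring
  rw [key, hfin]
  exact mul_le_mul_of_nonneg_right (by linarith) hP.le
end

section
/- Let p > 0 and l > 0 with l < min(1, p). Let α and β be real numbers such that 1/(1−l) < α ≤ 1/(1−p) and 2 < β < 2/(1−p) if p < 1, and α > 1/(1−l) and β > 2 if p ≥ 1. Let A > 0, B ≥ 0, c₀ ≥ 0 and t₀ ∈ ℝ. Then there exist ξ₀ ∈ (0,1] and T₀ ∈ (0,1] such that the function φ : ℝ × ℝ → ℝ defined by φ(s,t) = A (t−t₀)^α (max(ξ₀ − s/√(t−t₀), 0))^β satisfies, at every point (s,t) with t₀ < t < t₀ + T₀, s > 0 and ξ₀ − s/√(t−t₀) > 0, the inequality ∂_t φ(s,t) − ∂_s∂_s φ(s,t) + B·|∂_s φ(s,t)| + c₀·φ(s,t)^p ≤ 0, where ∂_t φ, ∂_s φ and ∂_s∂_s φ denote the partial derivative in t, the partial derivative in s, and the second partial derivative in s, respectively. -/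
/-- The self-similar subsolution profile of Theorem 3.5, in boundary-normal
coordinates: `φ(s,t) = A (t−t₀)^α (ξ₀ − s/√(t−t₀))₊^β`. -/
noncomputable def phi (A t₀ ξ₀ α β : ℝ) (s t : ℝ) : ℝ :=
  A * (t - t₀) ^ α * (max (ξ₀ - s / Real.sqrt (t - t₀)) 0) ^ β

set_option linter.unusedVariables false

lemma hasDerivAt_phi_s (A t₀ ξ₀ α β s t : ℝ) (ht : 0 < t - t₀)
    (hw : 0 < ξ₀ - s / Real.sqrt (t - t₀)) :
    HasDerivAt (fun σ => phi A t₀ ξ₀ α β σ t)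
      (A * (t - t₀) ^ α * (-(1 / Real.sqrt (t - t₀)) * β *
        (ξ₀ - s / Real.sqrt (t - t₀)) ^ (β - 1))) s := by
  have hc : Continuous fun σ : ℝ => ξ₀ - σ / Real.sqrt (t - t₀) := by continuity
  have hev : ∀ᶠ σ in nhds s, 0 < ξ₀ - σ / Real.sqrt (t - t₀) :=
    hc.continuousAt.eventually (eventually_gt_nhds hw)
  have hd : HasDerivAt
      (fun σ : ℝ => A * (t - t₀) ^ α * (ξ₀ - σ / Real.sqrt (t - t₀)) ^ β)
      (A * (t - t₀) ^ α * (-(1 / Real.sqrt (t - t₀)) * β *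
        (ξ₀ - s / Real.sqrt (t - t₀)) ^ (β - 1))) s :=
    ((((hasDerivAt_id s).div_const _).const_sub ξ₀).rpow_const (Or.inl hw.ne')).const_mul _
  exact hd.congr_of_eventuallyEq (hev.mono fun σ hσ => by
    simp [phi, max_eq_left hσ.le])

lemma deriv2_phi_s (A t₀ ξ₀ α β s t : ℝ) (ht : 0 < t - t₀)
    (hw : 0 < ξ₀ - s / Real.sqrt (t - t₀)) :
    deriv (fun σ => deriv (fun σ' => phi A t₀ ξ₀ α β σ' t) σ) s
      = (A * (t - t₀) ^ α * (-(1 / Real.sqrt (t - t₀)) * β)) *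
        (-(1 / Real.sqrt (t - t₀)) * (β - 1) *
          (ξ₀ - s / Real.sqrt (t - t₀)) ^ (β - 1 - 1)) := by
  have hc : Continuous fun σ : ℝ => ξ₀ - σ / Real.sqrt (t - t₀) := by continuity
  have hev : ∀ᶠ σ in nhds s, 0 < ξ₀ - σ / Real.sqrt (t - t₀) :=
    hc.continuousAt.eventually (eventually_gt_nhds hw)
  have heq : (fun σ => deriv (fun σ' => phi A t₀ ξ₀ α β σ' t) σ) =ᶠ[nhds s]
      (fun σ => (A * (t - t₀) ^ α * (-(1 / Real.sqrt (t - t₀)) * β)) *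
        (ξ₀ - σ / Real.sqrt (t - t₀)) ^ (β - 1)) := by
    refine hev.mono fun σ hσ => ?_
    show deriv (fun σ' => phi A t₀ ξ₀ α β σ' t) σ = _
    rw [(hasDerivAt_phi_s A t₀ ξ₀ α β σ t ht hσ).deriv]
    ring
  have hF : HasDerivAt
      (fun σ : ℝ => (A * (t - t₀) ^ α * (-(1 / Real.sqrt (t - t₀)) * β)) *
        (ξ₀ - σ / Real.sqrt (t - t₀)) ^ (β - 1))
      ((A * (t - t₀) ^ α * (-(1 / Real.sqrt (t - t₀)) * β)) *
        (-(1 / Real.sqrt (t - t₀)) * (β - 1) *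
          (ξ₀ - s / Real.sqrt (t - t₀)) ^ (β - 1 - 1))) s :=
    ((((hasDerivAt_id s).div_const _).const_sub ξ₀).rpow_const (Or.inl hw.ne')).const_mul _
  rw [heq.deriv_eq, hF.deriv]

lemma hasDerivAt_phi_t (A t₀ ξ₀ α β s t : ℝ) (ht : 0 < t - t₀)
    (hw : 0 < ξ₀ - s / Real.sqrt (t - t₀)) :
    HasDerivAt (fun τ => phi A t₀ ξ₀ α β s τ)
      (A * ((1 * α * (t - t₀) ^ (α - 1)) * (ξ₀ - s / Real.sqrt (t - t₀)) ^ β +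
        (t - t₀) ^ α *
          (-((0 * Real.sqrt (t - t₀) - s * (1 / (2 * Real.sqrt (t - t₀)))) /
              Real.sqrt (t - t₀) ^ 2) * β *
            (ξ₀ - s / Real.sqrt (t - t₀)) ^ (β - 1)))) t := by
  have hr : 0 < Real.sqrt (t - t₀) := Real.sqrt_pos.2 ht
  have hev1 : ∀ᶠ t' in nhds t, 0 < t' - t₀ :=
    (eventually_gt_nhds (show t₀ < t by linarith)).mono fun t' h => sub_pos.2 h
  have hcA : ContinuousAt (fun t' : ℝ => ξ₀ - s / Real.sqrt (t' - t₀)) t := by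
    refine continuousAt_const.sub (continuousAt_const.div ?_ hr.ne')
    exact (Real.continuous_sqrt.comp (continuous_sub_right t₀)).continuousAt
  have hev2 : ∀ᶠ t' in nhds t, 0 < ξ₀ - s / Real.sqrt (t' - t₀) :=
    hcA.eventually (eventually_gt_nhds hw)
  have hu : HasDerivAt (fun t' : ℝ => (t' - t₀) ^ α) (1 * α * (t - t₀) ^ (α - 1)) t :=
    ((hasDerivAt_id t).sub_const t₀).rpow_const (Or.inl ht.ne')
  have hsq : HasDerivAt (fun t' : ℝ => Real.sqrt (t' - t₀)) (1 / (2 * Real.sqrt (t - t₀))) t :=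
    ((hasDerivAt_id t).sub_const t₀).sqrt ht.ne'
  have hdiv : HasDerivAt (fun t' : ℝ => s / Real.sqrt (t' - t₀))
      ((0 * Real.sqrt (t - t₀) - s * (1 / (2 * Real.sqrt (t - t₀)))) / Real.sqrt (t - t₀) ^ 2)
      t := (hasDerivAt_const t s).div hsq hr.ne'
  have hv : HasDerivAt (fun t' : ℝ => (ξ₀ - s / Real.sqrt (t' - t₀)) ^ β)
      (-((0 * Real.sqrt (t - t₀) - s * (1 / (2 * Real.sqrt (t - t₀)))) /
          Real.sqrt (t - t₀) ^ 2) * β * (ξ₀ - s / Real.sqrt (t - t₀)) ^ (β - 1)) t :=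
    (hdiv.const_sub ξ₀).rpow_const (Or.inl hw.ne')
  refine ((hu.mul hv).const_mul A).congr_of_eventuallyEq ?_
  filter_upwards [hev1, hev2] with t' h1 h2
  simp [phi, max_eq_left h2.le, mul_assoc]


set_option maxHeartbeats 1000000 in
/-- Derivative-level form of the interior subsolution inequality for the self-similar
profile constructed in the proof of Theorem 3.5: for suitably small `ξ₀` and `T₀`,
`∂_t φ − ∂_s∂_s φ + B|∂_s φ| + c₀ φ^p ≤ 0` on the relevant region. -/
theorem profile_subsolution (p l : ℝ) (hp : 0 < p) (hl : 0 < l)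
    (hlmin : l < min 1 p) (α β : ℝ)
    (hlt : p < 1 → 1 / (1 - l) < α ∧ α ≤ 1 / (1 - p) ∧ 2 < β ∧ β < 2 / (1 - p))
    (hge : 1 ≤ p → 1 / (1 - l) < α ∧ 2 < β)
    (A B c₀ t₀ : ℝ) (hA : 0 < A) (hB : 0 ≤ B) (hc₀ : 0 ≤ c₀) :
    ∃ ξ₀ ∈ Set.Ioc (0 : ℝ) 1, ∃ T₀ ∈ Set.Ioc (0 : ℝ) 1,
      ∀ s t : ℝ, t₀ < t → t < t₀ + T₀ → 0 < s →
        0 < ξ₀ - s / Real.sqrt (t - t₀) →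
        deriv (fun τ => phi A t₀ ξ₀ α β s τ) t
          - deriv (fun σ => deriv (fun σ' => phi A t₀ ξ₀ α β σ' t) σ) s
          + B * |deriv (fun σ => phi A t₀ ξ₀ α β σ t) s|
          + c₀ * phi A t₀ ξ₀ α β s t ^ p ≤ 0 := by
  have h1l : 0 < 1 - l := by
    have := hlmin.trans_le (min_le_left _ _); linarith
  have hαβ : 1 < α ∧ 2 < β ∧ 0 ≤ α * p - α + 1 ∧ 0 < β * p - β + 2 := by
    have hgt : 1 < 1 / (1 - l) := by rw [lt_div_iff₀ h1l]; nlinarith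
    rcases lt_or_ge p 1 with hp1 | hp1
    · obtain ⟨ha1, ha2, hb1, hb2⟩ := hlt hp1
      have h1p : 0 < 1 - p := by linarith
      rw [le_div_iff₀ h1p] at ha2
      rw [lt_div_iff₀ h1p] at hb2
      exact ⟨hgt.trans ha1, hb1, by nlinarith, by nlinarith⟩
    · obtain ⟨ha1, hb1⟩ := hge hp1
      have hα1 : 1 < α := hgt.trans ha1
      exact ⟨hα1, hb1, by nlinarith, by nlinarith⟩
  obtain ⟨hα1, hβ2, he1, he2⟩ := hαβ
  have hK : 0 < β * (β - 1) := by nlinarith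
  -- choice of ξ₀ = x and T₀ = x²
  have hcont : ContinuousAt
      (fun x : ℝ => (α + β / 2 + B * β) * x ^ 2 + c₀ * A ^ (p - 1) * x ^ (β * p - β + 2)) 0 :=
    ((continuous_const.mul (continuous_pow 2)).continuousAt).add
      (continuousAt_const.mul (Real.continuousAt_rpow_const 0 _ (Or.inr he2.le)))
  have htend : Filter.Tendsto
      (fun x : ℝ => (α + β / 2 + B * β) * x ^ 2 + c₀ * A ^ (p - 1) * x ^ (β * p - β + 2))
      (nhdsWithin 0 (Set.Ioi 0)) (nhds 0) := by
    have h : Filter.Tendsto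
        (fun x : ℝ => (α + β / 2 + B * β) * x ^ 2 + c₀ * A ^ (p - 1) * x ^ (β * p - β + 2))
        (nhdsWithin 0 (Set.Ioi 0))
        (nhds ((α + β / 2 + B * β) * (0:ℝ) ^ 2 + c₀ * A ^ (p - 1) * (0:ℝ) ^ (β * p - β + 2))) :=
      hcont.tendsto.mono_left nhdsWithin_le_nhds
    simpa [Real.zero_rpow he2.ne'] using h
  have hev : ∀ᶠ x in nhdsWithin (0:ℝ) (Set.Ioi 0),
      (α + β / 2 + B * β) * x ^ 2 + c₀ * A ^ (p - 1) * x ^ (β * p - β + 2) < β * (β - 1) :=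
    htend.eventually (eventually_lt_nhds hK)
  have hmem : ∀ᶠ x in nhdsWithin (0:ℝ) (Set.Ioi 0), x ∈ Set.Ioc (0:ℝ) 1 :=
    Ioc_mem_nhdsGT one_pos
  obtain ⟨x, hxG, hx01⟩ := (hev.and hmem).exists
  have hx0 : 0 < x := hx01.1
  have hx1 : x ≤ 1 := hx01.2
  refine ⟨x, hx01, x ^ 2, ⟨by positivity, by nlinarith⟩, ?_⟩
  intro s t ht1 ht2 hs hw
  have hτ : 0 < t - t₀ := sub_pos.2 ht1
  have hr : 0 < Real.sqrt (t - t₀) := Real.sqrt_pos.2 hτ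
  have hr2 : Real.sqrt (t - t₀) * Real.sqrt (t - t₀) = t - t₀ := Real.mul_self_sqrt hτ.le
  have hphi : phi A t₀ x α β s t
      = A * (t - t₀) ^ α * (x - s / Real.sqrt (t - t₀)) ^ β := by
    simp only [phi]; rw [max_eq_left hw.le]
  rw [(hasDerivAt_phi_t A t₀ x α β s t hτ hw).deriv, deriv2_phi_s A t₀ x α β s t hτ hw,
    (hasDerivAt_phi_s A t₀ x α β s t hτ hw).deriv, hphi]
  set τ : ℝ := t - t₀ with hτd
  set r : ℝ := Real.sqrt τ with hrd
  set w : ℝ := x - s / r with hwd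
  have hsr0 : 0 ≤ s / r := div_nonneg hs.le hr.le
  have hw0 : 0 < x - s / r := by rw [← hwd]; exact hw
  have hτx : τ < x ^ 2 := by rw [hτd]; linarith
  have hrx : r ≤ x := by
    rw [hrd]
    calc Real.sqrt τ ≤ Real.sqrt (x ^ 2) := Real.sqrt_le_sqrt hτx.le
      _ = x := Real.sqrt_sq hx0.le
  clear_value τ r w
  have hsrx : s / r ≤ x := by linarith
  have hwx : w ≤ x := by rw [hwd]; linarith
  have hτ1 : τ ≤ 1 := by nlinarith
  -- power identities
  have hτα : τ ^ α = τ ^ (α - 1) * (r * r) := by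
    rw [hr2, ← Real.rpow_add_one hτ.ne' (α - 1)]; congr 1; ring
  have hwβ1 : w ^ (β - 1) = w ^ (β - 2) * w := by
    rw [← Real.rpow_add_one hw.ne' (β - 2)]; congr 1; ring
  have hwβ : w ^ β = w ^ (β - 2) * w * w := by
    rw [← hwβ1, ← Real.rpow_add_one hw.ne' (β - 1)]; congr 1; ring
  have hwβ11 : w ^ (β - 1 - 1) = w ^ (β - 2) := by congr 1; ring
  have hAp : A ^ p = A ^ (p - 1) * A := by
    rw [← Real.rpow_add_one hA.ne' (p - 1)]; congr 1; ring
  have hφp : (A * τ ^ α * w ^ β) ^ p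
      = A * τ ^ (α - 1) * w ^ (β - 2)
        * (A ^ (p - 1) * (τ ^ (α * p - α + 1) * w ^ (β * p - β + 2))) := by
    rw [Real.mul_rpow (mul_nonneg hA.le (Real.rpow_nonneg hτ.le α)) (Real.rpow_nonneg hw.le β),
      Real.mul_rpow hA.le (Real.rpow_nonneg hτ.le α),
      ← Real.rpow_mul hτ.le, ← Real.rpow_mul hw.le,
      show α * p = (α - 1) + (α * p - α + 1) by ring,
      show β * p = (β - 2) + (β * p - β + 2) by ring,
      Real.rpow_add hτ, Real.rpow_add hw, hAp]
    ring
  have habs : |A * τ ^ α * (-(1 / r) * β * w ^ (β - 1))|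
      = A * τ ^ α * (1 / r * β * w ^ (β - 1)) := by
    rw [show A * τ ^ α * (-(1 / r) * β * w ^ (β - 1))
        = -(A * τ ^ α * (1 / r * β * w ^ (β - 1))) by ring, abs_neg, abs_of_nonneg]
    refine mul_nonneg (mul_nonneg hA.le (Real.rpow_nonneg hτ.le α)) ?_
    exact mul_nonneg (mul_nonneg (by positivity) (by linarith)) (Real.rpow_nonneg hw.le _)
  rw [hφp, habs, hτα, hwβ, hwβ1, hwβ11]
  -- bounds
  have hT1 : τ ^ (α * p - α + 1) ≤ 1 := Real.rpow_le_one hτ.le hτ1 he1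
  have hW2 : w ^ (β * p - β + 2) ≤ x ^ (β * p - β + 2) :=
    Real.rpow_le_rpow hw.le hwx he2.le
  have hW2' : 0 ≤ w ^ (β * p - β + 2) := Real.rpow_nonneg hw.le _
  have hT1' : 0 ≤ τ ^ (α * p - α + 1) := Real.rpow_nonneg hτ.le _
  have hA1 : 0 < A ^ (p - 1) := Real.rpow_pos_of_pos hA _
  have hM : α * (w * w) + β / 2 * (s / r) * w - β * (β - 1) + B * (β * (w * r))
      + c₀ * (A ^ (p - 1) * (τ ^ (α * p - α + 1) * w ^ (β * p - β + 2))) ≤ 0 := by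
    have t1 : α * (w * w) ≤ α * (x * x) :=
      mul_le_mul_of_nonneg_left (mul_self_le_mul_self hw.le hwx) (by linarith)
    have t2 : β / 2 * ((s / r) * w) ≤ β / 2 * (x * x) :=
      mul_le_mul_of_nonneg_left (mul_le_mul hsrx hwx hw.le hx0.le) (by linarith)
    have t3 : B * (β * (w * r)) ≤ B * (β * (x * x)) :=
      mul_le_mul_of_nonneg_left
        (mul_le_mul_of_nonneg_left (mul_le_mul hwx hrx hr.le hx0.le) (by linarith)) hB
    have t4 : c₀ * (A ^ (p - 1) * (τ ^ (α * p - α + 1) * w ^ (β * p - β + 2)))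
        ≤ c₀ * (A ^ (p - 1) * (1 * x ^ (β * p - β + 2))) := by
      have h5 : τ ^ (α * p - α + 1) * w ^ (β * p - β + 2) ≤ 1 * x ^ (β * p - β + 2) :=
        mul_le_mul hT1 hW2 hW2' zero_le_one
      exact mul_le_mul_of_nonneg_left (mul_le_mul_of_nonneg_left h5 hA1.le) hc₀
    have hexp : (α + β / 2 + B * β) * x ^ 2
        = α * (x * x) + β / 2 * (x * x) + B * (β * (x * x)) := by ring
    have hx2 : c₀ * (A ^ (p - 1) * (1 * x ^ (β * p - β + 2)))
        = c₀ * A ^ (p - 1) * x ^ (β * p - β + 2) := by ring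
    linarith
  have hXY : 0 ≤ A * τ ^ (α - 1) * w ^ (β - 2) :=
    mul_nonneg (mul_nonneg hA.le (Real.rpow_nonneg hτ.le _)) (Real.rpow_nonneg hw.le _)
  have hprod : (A * τ ^ (α - 1) * w ^ (β - 2))
      * (α * (w * w) + β / 2 * (s / r) * w - β * (β - 1) + B * (β * (w * r))
        + c₀ * (A ^ (p - 1) * (τ ^ (α * p - α + 1) * w ^ (β * p - β + 2)))) ≤ 0 :=
    mul_nonpos_iff.2 (Or.inl ⟨hXY, hM⟩)
  refine le_trans (le_of_eq ?_) hprod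
  field_simp
  ring
end

section
/- Let p and l be real numbers with 0 < p < l < 1, let γ satisfy (1−l)/2 < γ < (1−p)/2, and let A > 0, B ≥ 0 and c₁ > 0. Then there exists ξ₀ ∈ (0,1] such that for every ε ∈ (0,1] and every ξ ∈ (0, ξ₀] the following inequality holds: c₁ (εA)^p ξ^{p/γ} ≥ (1/γ)(1/γ − 1) ε A ε^{−2γ} ξ^{1/γ − 2} + B (1/γ) ε A ε^{−γ} ξ^{1/γ − 1}. -/
/-- The central algebraic inequality in the proof of Theorem 3.8 (uniqueness of the
trivial solution for `p < l < 1` when `c ≥ c₁ > 0`): the profile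
`ū_ε = εA(ξ₀ − ε^{−γ}s)₊^{1/γ}` satisfies the interior strict supersolution
inequality for small `ξ₀`, uniformly in `ε ∈ (0,1]`. -/
theorem supersolution_algebraic_inequality (p l γ A B c₁ : ℝ)
    (hp : 0 < p) (hpl : p < l) (hl : l < 1)
    (hγ1 : (1 - l) / 2 < γ) (hγ2 : γ < (1 - p) / 2)
    (hA : 0 < A) (hB : 0 ≤ B) (hc₁ : 0 < c₁) :
    ∃ ξ₀ ∈ Set.Ioc (0 : ℝ) 1, ∀ ε ∈ Set.Ioc (0 : ℝ) 1, ∀ ξ ∈ Set.Ioc (0 : ℝ) ξ₀,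
      (1 / γ) * (1 / γ - 1) * ε * A * ε ^ (-(2 * γ)) * ξ ^ (1 / γ - 2)
        + B * (1 / γ) * ε * A * ε ^ (-γ) * ξ ^ (1 / γ - 1)
      ≤ c₁ * (ε * A) ^ p * ξ ^ (p / γ) := by
  have hγ0 : 0 < γ := lt_of_le_of_lt (by linarith) hγ1
  set α1 : ℝ := (1 - p) / γ - 2 with hα1def
  set α2 : ℝ := (1 - p) / γ - 1 with hα2def
  have hα1 : 0 < α1 := by
    have : (2 : ℝ) < (1 - p) / γ := (lt_div_iff₀ hγ0).mpr (by linarith)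
    simp only [hα1def]; linarith
  have hα2 : 0 < α2 := by simp only [hα2def]; simp only [hα1def] at hα1; linarith
  have hγlt : 2 < 1 / γ := by
    rw [lt_div_iff₀ hγ0]; linarith
  set C1 : ℝ := (1 / γ) * (1 / γ - 1) * A with hC1def
  have hC1 : 0 < C1 := by
    apply mul_pos (mul_pos _ _) hA
    · positivity
    · linarith
  set C2 : ℝ := B * (1 / γ) * A with hC2def
  have hC2 : 0 ≤ C2 := by positivity
  set D1 : ℝ := c₁ * A ^ p / (2 * C1) with hD1def
  set D2 : ℝ := c₁ * A ^ p / (2 * (C2 + 1)) with hD2def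
  have hAp : 0 < A ^ p := Real.rpow_pos_of_pos hA p
  have hD1 : 0 < D1 := by
    apply div_pos (by positivity) (by linarith)
  have hD2 : 0 < D2 := by
    apply div_pos (by positivity) (by linarith)
  refine ⟨min 1 (min (D1 ^ α1⁻¹) (D2 ^ α2⁻¹)), ⟨?_, min_le_left _ _⟩, ?_⟩
  · exact lt_min one_pos (lt_min (Real.rpow_pos_of_pos hD1 _) (Real.rpow_pos_of_pos hD2 _))
  intro ε hε ξ hξ
  obtain ⟨hε0, hε1⟩ := hε
  obtain ⟨hξ0, hξle⟩ := hξ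
  have hξD1 : ξ ≤ D1 ^ α1⁻¹ :=
    hξle.trans ((min_le_right _ _).trans (min_le_left _ _))
  have hξD2 : ξ ≤ D2 ^ α2⁻¹ :=
    hξle.trans ((min_le_right _ _).trans (min_le_right _ _))
  have hξa1 : ξ ^ α1 ≤ D1 := by
    calc ξ ^ α1 ≤ (D1 ^ α1⁻¹) ^ α1 := Real.rpow_le_rpow hξ0.le hξD1 hα1.le
    _ = D1 := by
      rw [← Real.rpow_mul hD1.le, inv_mul_cancel₀ hα1.ne', Real.rpow_one]
  have hξa2 : ξ ^ α2 ≤ D2 := by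
    calc ξ ^ α2 ≤ (D2 ^ α2⁻¹) ^ α2 := Real.rpow_le_rpow hξ0.le hξD2 hα2.le
    _ = D2 := by
      rw [← Real.rpow_mul hD2.le, inv_mul_cancel₀ hα2.ne', Real.rpow_one]
  -- rewrite the ε factors
  have hee1 : ε * ε ^ (-(2 * γ)) = ε ^ p * ε ^ (1 - 2 * γ - p) := by
    nth_rewrite 1 [← Real.rpow_one ε]
    rw [← Real.rpow_add hε0, ← Real.rpow_add hε0]
    congr 1
    ring
  have hee2 : ε * ε ^ (-γ) = ε ^ p * ε ^ (1 - γ - p) := by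
    nth_rewrite 1 [← Real.rpow_one ε]
    rw [← Real.rpow_add hε0, ← Real.rpow_add hε0]
    congr 1
    ring
  have hxx1 : ξ ^ (1 / γ - 2) = ξ ^ (p / γ) * ξ ^ α1 := by
    rw [← Real.rpow_add hξ0]
    congr 1
    simp only [hα1def]
    field_simp
    ring
  have hxx2 : ξ ^ (1 / γ - 1) = ξ ^ (p / γ) * ξ ^ α2 := by
    rw [← Real.rpow_add hξ0]
    congr 1
    simp only [hα2def]
    field_simp
    ring
  have he1le : ε ^ (1 - 2 * γ - p) ≤ 1 :=
    Real.rpow_le_one hε0.le hε1 (by linarith)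
  have he2le : ε ^ (1 - γ - p) ≤ 1 :=
    Real.rpow_le_one hε0.le hε1 (by linarith)
  have hεp : 0 < ε ^ p := Real.rpow_pos_of_pos hε0 p
  have hξp : 0 < ξ ^ (p / γ) := Real.rpow_pos_of_pos hξ0 _
  have h1 : (1 / γ) * (1 / γ - 1) * ε * A * ε ^ (-(2 * γ)) * ξ ^ (1 / γ - 2)
      ≤ C1 * D1 * (ε ^ p * ξ ^ (p / γ)) := by
    have : (1 / γ) * (1 / γ - 1) * ε * A * ε ^ (-(2 * γ)) * ξ ^ (1 / γ - 2)
        = C1 * (ε ^ p * ξ ^ (p / γ)) * (ε ^ (1 - 2 * γ - p) * ξ ^ α1) := by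
      rw [hC1def]
      rw [show (1 / γ) * (1 / γ - 1) * ε * A * ε ^ (-(2 * γ)) * ξ ^ (1 / γ - 2)
          = (1 / γ) * (1 / γ - 1) * A * (ε * ε ^ (-(2 * γ))) * ξ ^ (1 / γ - 2) by ring,
        hee1, hxx1]
      ring
    rw [this]
    have h01 : ε ^ (1 - 2 * γ - p) * ξ ^ α1 ≤ 1 * D1 :=
      mul_le_mul he1le hξa1 (Real.rpow_pos_of_pos hξ0 _).le one_pos.le
    calc C1 * (ε ^ p * ξ ^ (p / γ)) * (ε ^ (1 - 2 * γ - p) * ξ ^ α1)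
        ≤ C1 * (ε ^ p * ξ ^ (p / γ)) * (1 * D1) := by
          apply mul_le_mul_of_nonneg_left h01 (by positivity)
      _ = C1 * D1 * (ε ^ p * ξ ^ (p / γ)) := by ring
  have h2 : B * (1 / γ) * ε * A * ε ^ (-γ) * ξ ^ (1 / γ - 1)
      ≤ (C2 + 1) * D2 * (ε ^ p * ξ ^ (p / γ)) := by
    have : B * (1 / γ) * ε * A * ε ^ (-γ) * ξ ^ (1 / γ - 1)
        = C2 * (ε ^ p * ξ ^ (p / γ)) * (ε ^ (1 - γ - p) * ξ ^ α2) := by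
      rw [hC2def]
      rw [show B * (1 / γ) * ε * A * ε ^ (-γ) * ξ ^ (1 / γ - 1)
          = B * (1 / γ) * A * (ε * ε ^ (-γ)) * ξ ^ (1 / γ - 1) by ring,
        hee2, hxx2]
      ring
    rw [this]
    have h02 : ε ^ (1 - γ - p) * ξ ^ α2 ≤ 1 * D2 :=
      mul_le_mul he2le hξa2 (Real.rpow_pos_of_pos hξ0 _).le one_pos.le
    calc C2 * (ε ^ p * ξ ^ (p / γ)) * (ε ^ (1 - γ - p) * ξ ^ α2)
        ≤ C2 * (ε ^ p * ξ ^ (p / γ)) * (1 * D2) := by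
          apply mul_le_mul_of_nonneg_left h02 (by positivity)
      _ = C2 * D2 * (ε ^ p * ξ ^ (p / γ)) := by ring
      _ ≤ (C2 + 1) * D2 * (ε ^ p * ξ ^ (p / γ)) := by
          apply mul_le_mul_of_nonneg_right _ (by positivity)
          nlinarith
  have hCD1 : C1 * D1 = c₁ * A ^ p / 2 := by
    rw [hD1def, mul_comm 2 C1, ← div_div, ← mul_div_assoc, ← mul_div_assoc,
      mul_div_cancel_left₀ _ hC1.ne']
  have hCD2 : (C2 + 1) * D2 = c₁ * A ^ p / 2 := by
    have hne : C2 + 1 ≠ 0 := by linarith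
    rw [hD2def, mul_comm 2 (C2 + 1), ← div_div, ← mul_div_assoc, ← mul_div_assoc,
      mul_div_cancel_left₀ _ hne]
  have hRHS : c₁ * (ε * A) ^ p * ξ ^ (p / γ)
      = (c₁ * A ^ p / 2) * (ε ^ p * ξ ^ (p / γ)) + (c₁ * A ^ p / 2) * (ε ^ p * ξ ^ (p / γ)) := by
    rw [Real.mul_rpow hε0.le hA.le]; ring
  rw [hRHS]
  rw [hCD1] at h1
  rw [hCD2] at h2
  linarith
end

section
/- Let n, m ≥ 1, let Ω ⊆ ℝᵐ be a bounded open set, let K ⊆ ℝⁿ be a compact set, let T₀ > 0 and l > 0. Let h : ℝⁿ × ℝ → ℝ, k : ℝⁿ × ℝᵐ × ℝ → ℝ and ū : ℝᵐ × ℝ → ℝ be continuous functions with k ≥ 0 and ū ≥ 0, and suppose that for every (x,t) ∈ K × [0, T₀] one has h(x,t) > ∫_Ω k(x,y,t)·ū(y,t)^l dy. Then there exists ε > 0 such that for every (x,t) ∈ K × [0, T₀] one has h(x,t) ≥ ∫_Ω k(x,y,t)·(ū(y,t) + ε)^l dy. -/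
/-!
The left-hand side `∫_Ω k(x,y,t) (ū(y,t) + ε)^l dy` is jointly continuous in `((x,t), ε)`, since
`Ω` has compact closure and the integrand is jointly continuous. A strict inequality between
continuous functions at `ε = 0` on the compact set `K × [0,T₀]` therefore persists for all small
`ε > 0`.
-/

open MeasureTheory Filter Topology

theorem continuous_parametric_setIntegral_of_isCompact_closure
    {X Y E : Type*} [TopologicalSpace X] [FirstCountableTopology X] [LocallyCompactSpace X]
    [TopologicalSpace Y] [MeasurableSpace Y] [OpensMeasurableSpace Y]
    [NormedAddCommGroup E] [NormedSpace ℝ E] [SecondCountableTopologyEither Y E]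
    {μ : Measure Y} [IsLocallyFiniteMeasure μ]
    {f : X → Y → E} (hf : Continuous f.uncurry) {s : Set Y} (hs : IsCompact (closure s)) :
    Continuous (∫ y in s, f · y ∂μ) := by
  have hrestrict : (μ.restrict s).restrict (closure s) = μ.restrict s := by
    rw [Measure.restrict_restrict isClosed_closure.measurableSet,
      Set.inter_eq_right.mpr subset_closure]
  simpa only [hrestrict] using
    continuous_parametric_integral_of_continuous (μ := μ.restrict s) hf hs

theorem IsCompact.exists_pos_forall_lt_of_continuous {X : Type*} [TopologicalSpace X]
    {S : Set X} (hS : IsCompact S) {f : ℝ → X → ℝ} {g : X → ℝ}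
    (hf : Continuous f.uncurry) (hg : Continuous g) (hlt : ∀ x ∈ S, f 0 x < g x) :
    ∃ ε > 0, ∀ x ∈ S, f ε x < g x := by
  have hnear : ∀ᶠ ε in 𝓝 (0 : ℝ), ∀ x ∈ S, f ε x < g x :=
    hS.eventually_forall_of_forall_eventually fun x hx =>
      (hf.continuousAt.eventually_lt (hg.comp continuous_snd).continuousAt (hlt x hx))
  exact ((hnear.filter_mono (nhdsWithin_le_nhds (s := Set.Ioi 0))).and
    self_mem_nhdsWithin).exists.imp fun ε ⟨hε, hpos⟩ => ⟨hpos, hε⟩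

theorem strict_supersolution_shift_general (n m : ℕ)
    (Ω : Set (EuclideanSpace ℝ (Fin m)))
    (hΩb : Bornology.IsBounded Ω)
    (K : Set (EuclideanSpace ℝ (Fin n))) (hK : IsCompact K)
    (T₀ l : ℝ) (hl : 0 < l)
    (h : EuclideanSpace ℝ (Fin n) → ℝ → ℝ)
    (k : EuclideanSpace ℝ (Fin n) → EuclideanSpace ℝ (Fin m) → ℝ → ℝ)
    (ubar : EuclideanSpace ℝ (Fin m) → ℝ → ℝ)
    (hh : Continuous fun q : EuclideanSpace ℝ (Fin n) × ℝ => h q.1 q.2)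
    (hk : Continuous fun q : EuclideanSpace ℝ (Fin n) × EuclideanSpace ℝ (Fin m) × ℝ =>
      k q.1 q.2.1 q.2.2)
    (hu : Continuous fun q : EuclideanSpace ℝ (Fin m) × ℝ => ubar q.1 q.2)
    (hstrict : ∀ x ∈ K, ∀ t ∈ Set.Icc (0 : ℝ) T₀,
      (∫ y in Ω, k x y t * ubar y t ^ l) < h x t) :
    ∃ ε > (0 : ℝ), ∀ x ∈ K, ∀ t ∈ Set.Icc (0 : ℝ) T₀,
      (∫ y in Ω, k x y t * (ubar y t + ε) ^ l) ≤ h x t := by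
  have hrpow : Continuous fun z : ℝ => z ^ l := by
    simpa using Real.continuous_rpow_const hl.le
  have hintegrand : Continuous fun p : (ℝ × EuclideanSpace ℝ (Fin n) × ℝ) × EuclideanSpace ℝ (Fin m) =>
      k p.1.2.1 p.2 p.1.2.2 * (ubar p.2 p.1.2.2 + p.1.1) ^ l := by
    have hk' := hk.comp (by fun_prop : Continuous
      fun p : (ℝ × EuclideanSpace ℝ (Fin n) × ℝ) × EuclideanSpace ℝ (Fin m) =>
        (p.1.2.1, p.2, p.1.2.2))
    have hu' := hu.comp (by fun_prop : Continuous
      fun p : (ℝ × EuclideanSpace ℝ (Fin n) × ℝ) × EuclideanSpace ℝ (Fin m) => (p.2, p.1.2.2))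
    exact hk'.mul (hrpow.comp (hu'.add (by fun_prop)))
  obtain ⟨ε, hε, hlt⟩ := (hK.prod isCompact_Icc).exists_pos_forall_lt_of_continuous
    (f := fun ε q => ∫ y in Ω, k q.1 y q.2 * (ubar y q.2 + ε) ^ l)
    (continuous_parametric_setIntegral_of_isCompact_closure hintegrand hΩb.isCompact_closure)
    hh (fun q hq => by simpa using hstrict q.1 hq.1 q.2 hq.2)
  exact ⟨ε, hε, fun x hx t ht => (hlt (x, t) ⟨hx, ht⟩).le⟩

/-- Key step of Lemma 3.7: if `h(x,t)` strictly exceeds the nonlocal boundary term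
`∫_Ω k(x,y,t) ū^l(y,t) dy` on the compact set `K × [0,T₀]`, then for a suitably small
`ε > 0` the shifted function `ū + ε` still satisfies the boundary supersolution
inequality. -/
theorem strict_supersolution_shift (n m : ℕ) (hn : 1 ≤ n) (hm : 1 ≤ m)
    (Ω : Set (EuclideanSpace ℝ (Fin m))) (hΩo : IsOpen Ω)
    (hΩb : Bornology.IsBounded Ω)
    (K : Set (EuclideanSpace ℝ (Fin n))) (hK : IsCompact K)
    (T₀ l : ℝ) (hT₀ : 0 < T₀) (hl : 0 < l)
    (h : EuclideanSpace ℝ (Fin n) → ℝ → ℝ)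
    (k : EuclideanSpace ℝ (Fin n) → EuclideanSpace ℝ (Fin m) → ℝ → ℝ)
    (ubar : EuclideanSpace ℝ (Fin m) → ℝ → ℝ)
    (hh : Continuous fun q : EuclideanSpace ℝ (Fin n) × ℝ => h q.1 q.2)
    (hk : Continuous fun q : EuclideanSpace ℝ (Fin n) × EuclideanSpace ℝ (Fin m) × ℝ =>
      k q.1 q.2.1 q.2.2)
    (hu : Continuous fun q : EuclideanSpace ℝ (Fin m) × ℝ => ubar q.1 q.2)
    (hknn : ∀ x y t, 0 ≤ k x y t) (hunn : ∀ y t, 0 ≤ ubar y t)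
    (hstrict : ∀ x ∈ K, ∀ t ∈ Set.Icc (0 : ℝ) T₀,
      (∫ y in Ω, k x y t * ubar y t ^ l) < h x t) :
    ∃ ε > (0 : ℝ), ∀ x ∈ K, ∀ t ∈ Set.Icc (0 : ℝ) T₀,
      (∫ y in Ω, k x y t * (ubar y t + ε) ^ l) ≤ h x t :=
  strict_supersolution_shift_general n m Ω hΩb K hK T₀ l hl h k ubar hh hk hu hstrict
end
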